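/- Let m > c > 0 and k > 0 satisfy c/(m-c) < k < (m+c)/(m-c). Then the coexistence equilibrium exists in the open positive quadrant and the Jacobian J(K3) is Hurwitz: tr J(K3) < 0 and det J(K3) > 0, so both eigenvalues of J(K3) have strictly negative real part. -/
import Mathlib

open Polynomial in
lemma charpoly_eval_fin_two (M : Matrix (Fin 2) (Fin 2) ℂ) (z : ℂ) :
    M.charpoly.eval z = (z - M 0 0) * (z - M 1 1) - M 0 1 * M 1 0 := by
  rw [Matrix.charpoly, Matrix.det_fin_two, Matrix.charmatrix_apply_eq,
    Matrix.charmatrix_apply_eq, Matrix.charmatrix_apply_ne _ _ _ (by decide),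
    Matrix.charmatrix_apply_ne _ _ _ (by decide)]
  simp

theorem rm_jacobian_hurwitz
    (m c k : ℝ) (hmc : m > c) (hc : c > 0) (hk : k > 0)
    (hlow : c / (m - c) < k) (hhigh : k < (m + c) / (m - c)) :
    let J : Matrix (Fin 2) (Fin 2) ℝ :=
      !![c * (k * (m - c) - (m + c)) / (k * m * (m - c)), -c;
         (k * (m - c) - c) / (k * m), 0]
    let Nstar : ℝ := c / (m - c)
    let Pstar : ℝ := (k * (m - c) - c) / (k * (m - c) ^ 2)
    (0 < Nstar ∧ 0 < Pstar) ∧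
    J.trace < 0 ∧ 0 < J.det ∧
    ∀ z : ℂ, (Matrix.charpoly (J.map ((↑) : ℝ → ℂ))).IsRoot z → z.re < 0 := by
  intro J Nstar Pstar
  have hmc' : (0:ℝ) < m - c := by linarith
  have hm : (0:ℝ) < m := by linarith
  have hnum : 0 < k * (m - c) - c := by
    have := (div_lt_iff₀ hmc').mp hlow
    linarith
  have hnum2 : k * (m - c) - (m + c) < 0 := by
    have := (lt_div_iff₀ hmc').mp hhigh
    linarith
  have hkm : 0 < k * m := by positivity
  have hT : J.trace = c * (k * (m - c) - (m + c)) / (k * m * (m - c)) := by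
    simp [J, Matrix.trace_fin_two]
  have hD : J.det = c * ((k * (m - c) - c) / (k * m)) := by
    simp [J, Matrix.det_fin_two]
  have hTneg : J.trace < 0 := by
    rw [hT]
    apply div_neg_of_neg_of_pos
    · nlinarith
    · positivity
  have hDpos : 0 < J.det := by
    rw [hD]
    positivity
  refine ⟨⟨by positivity, by positivity⟩, hTneg, hDpos, ?_⟩
  intro z hz
  have hroot : (z - (J 0 0 : ℂ)) * (z - (J 1 1 : ℂ)) - (J 0 1 : ℂ) * (J 1 0 : ℂ) = 0 := by
    have := charpoly_eval_fin_two (J.map ((↑) : ℝ → ℂ)) z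
    simpa [Polynomial.IsRoot, this, Matrix.map_apply] using hz
  set T : ℝ := J.trace with hTdef
  set D : ℝ := J.det with hDdef
  have hTrw : J 0 0 + J 1 1 = T := by simp [hTdef, Matrix.trace_fin_two]
  have hDrw : J 0 0 * J 1 1 - J 0 1 * J 1 0 = D := by simp [hDdef, Matrix.det_fin_two]
  have heq : z ^ 2 - (T : ℂ) * z + (D : ℂ) = 0 := by
    rw [← hTrw, ← hDrw]
    push_cast
    rw [← hroot]
    ring
  -- split into real and imaginary parts
  have hre := congrArg Complex.re heq
  have him := congrArg Complex.im heq
  simp [pow_two, Complex.mul_re, Complex.mul_im] at hre him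
  -- him : z.im * (2 * z.re - T) = 0 (in some form)
  rcases eq_or_ne z.im 0 with h0 | h0
  · -- real root: z.re^2 - T z.re + D = 0
    by_contra hge
    push_neg at hge
    nlinarith [hre, h0, hDpos, hTneg]
  · have h2x : 2 * z.re = T := by
      rcases mul_eq_zero.mp (by nlinarith [him] : z.im * (2 * z.re - T) = 0) with h | h
      · exact absurd h h0
      · linarith
    linarith [hTneg, h2x]
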